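/- arXiv:1810.10118 — 2 statements merged into one kernel-verified Lean document; each statement's English description precedes it below -/
import Mathlib

section
/- Let E be a real inner product space, v₁, …, vₙ ∈ E vectors whose Gram matrix K (Kᵢⱼ = ⟨vᵢ, vⱼ⟩) is positive definite, μ ∈ E, and z ∈ ℝⁿ with zᵢ = ⟨μ, vᵢ⟩. Define g(S) = z_Sᵀ (K_{SS})⁻¹ z_S for S ⊆ {1, …, n}, where z_S and K_{SS} are the restrictions of z and K to indices in S. Then g is monotone nondecreasing: for all S ⊆ T ⊆ {1, …, n}, g(S) ≤ g(T). -/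
/-!
`g(T) = max_w (2 wᵀz_T - wᵀ K_{TT} w)`, the maximum being attained at `w = K_{TT}⁻¹ z_T`, since
the gap is the `K_{TT}`-quadratic form of `K_{TT}⁻¹ z_T - w`. Testing with the maximiser for `S`,
extended by zero from `S` to `T`, gives exactly `g(S)`, hence `g(S) ≤ g(T)`.
-/

open Matrix
open scoped RealInnerProductSpace

/-- The SBQ set objective `g(S) = z_Sᵀ (K_{SS})⁻¹ z_S`, where `z_S` is the subvector of `z`
on indices in `S` and `K_{SS}` is the principal submatrix of `K` on `S`. -/
noncomputable def gObj {n : ℕ} (K : Matrix (Fin n) (Fin n) ℝ) (z : Fin n → ℝ)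
    (S : Finset (Fin n)) : ℝ :=
  (fun i : S => z i.1) ⬝ᵥ
    ((K.submatrix (fun i : S => i.1) (fun j : S => j.1))⁻¹ *ᵥ fun i : S => z i.1)

namespace Matrix

variable {m k R : Type*} [Fintype m] [Fintype k]

section ExtendByZero

variable [CommSemiring R] {e : m → k}

theorem extend_zero_dotProduct (he : Function.Injective e) (x : m → R) (y : k → R) :
    Function.extend e x 0 ⬝ᵥ y = x ⬝ᵥ (y ∘ e) :=
  (Fintype.sum_of_injective e he _ _
    (fun j hj => by simp [Function.extend_apply' _ _ _ (by simpa using hj)])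
    (fun i => by simp [he.extend_apply])).symm

theorem mulVec_extend_zero_comp (M : Matrix k k R) (he : Function.Injective e) (x : m → R) :
    (M *ᵥ Function.extend e x 0) ∘ e = M.submatrix e e *ᵥ x := by
  ext i
  simp only [Function.comp_apply, mulVec, dotProduct_comm (M (e i)),
    extend_zero_dotProduct he]
  exact dotProduct_comm _ _

theorem extend_zero_dotProduct_mulVec_extend_zero (M : Matrix k k R)
    (he : Function.Injective e) (x : m → R) :
    Function.extend e x 0 ⬝ᵥ (M *ᵥ Function.extend e x 0) = x ⬝ᵥ (M.submatrix e e *ᵥ x) := by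
  rw [extend_zero_dotProduct he, mulVec_extend_zero_comp M he]

end ExtendByZero

namespace PosDef

variable [DecidableEq m] [DecidableEq k] {A : Matrix k k ℝ}

theorem two_mul_dotProduct_sub_le_dotProduct_inv_mulVec (hA : A.PosDef) (z w : k → ℝ) :
    2 * (w ⬝ᵥ z) - w ⬝ᵥ (A *ᵥ w) ≤ z ⬝ᵥ (A⁻¹ *ᵥ z) := by
  set y := A⁻¹ *ᵥ z
  have hAy : A *ᵥ y = z := by
    rw [mulVec_mulVec, mul_nonsing_inv _ ((isUnit_iff_isUnit_det A).1 hA.isUnit), one_mulVec]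
  have hsymm : y ⬝ᵥ (A *ᵥ w) = w ⬝ᵥ z := by
    rw [dotProduct_mulVec, ← mulVec_transpose, (isHermitian_iff_isSymm.1 hA.isHermitian).eq,
      hAy, dotProduct_comm]
  have hgap : 0 ≤ (y - w) ⬝ᵥ (A *ᵥ (y - w)) := by
    simpa using hA.posSemidef.dotProduct_mulVec_nonneg (y - w)
  calc 2 * (w ⬝ᵥ z) - w ⬝ᵥ (A *ᵥ w) = z ⬝ᵥ y - (y - w) ⬝ᵥ (A *ᵥ (y - w)) := by
        rw [mulVec_sub, hAy, sub_dotProduct, dotProduct_sub, dotProduct_sub, hsymm,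
          dotProduct_comm z]
        ring
    _ ≤ z ⬝ᵥ y := sub_le_self _ hgap

theorem dotProduct_submatrix_inv_mulVec_le (hA : A.PosDef) {e : m → k}
    (he : Function.Injective e) (z : k → ℝ) :
    (z ∘ e) ⬝ᵥ ((A.submatrix e e)⁻¹ *ᵥ (z ∘ e)) ≤ z ⬝ᵥ (A⁻¹ *ᵥ z) := by
  set y := (A.submatrix e e)⁻¹ *ᵥ (z ∘ e)
  have hAy : A.submatrix e e *ᵥ y = z ∘ e := by
    rw [mulVec_mulVec, mul_nonsing_inv _ ((isUnit_iff_isUnit_det _).1 (hA.submatrix he).isUnit),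
      one_mulVec]
  have key := hA.two_mul_dotProduct_sub_le_dotProduct_inv_mulVec z (Function.extend e y 0)
  rw [extend_zero_dotProduct he, extend_zero_dotProduct_mulVec_extend_zero A he, hAy,
    dotProduct_comm y] at key
  linarith

end PosDef

end Matrix

theorem gObj_monotone_general {n : ℕ} (K : Matrix (Fin n) (Fin n) ℝ) (hKpd : K.PosDef) (z : Fin n → ℝ)
    (S T : Finset (Fin n)) (hST : S ⊆ T) :
    gObj K z S ≤ gObj K z T :=
  (hKpd.submatrix Subtype.val_injective).dotProduct_submatrix_inv_mulVec_le
    (Set.inclusion_injective (Finset.coe_subset.2 hST)) (fun i : T => z i.1)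

/-- The SBQ objective `g(S) = z_Sᵀ (K_{SS})⁻¹ z_S` built from a positive definite Gram
matrix `K` of vectors `vᵢ` and `zᵢ = ⟪μ, vᵢ⟫` is monotone nondecreasing in `S`. -/
theorem gObj_monotone {E : Type*} [NormedAddCommGroup E] [InnerProductSpace ℝ E]
    {n : ℕ} (v : Fin n → E) (K : Matrix (Fin n) (Fin n) ℝ)
    (hK : ∀ i j, K i j = ⟪v i, v j⟫) (hKpd : K.PosDef)
    (μ : E) (z : Fin n → ℝ) (hz : ∀ i, z i = ⟪μ, v i⟫)
    (S T : Finset (Fin n)) (hST : S ⊆ T) :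
    gObj K z S ≤ gObj K z T :=
  gObj_monotone_general K hKpd z S T hST
end

section
/- Let g be a set function on subsets of {1, …, n} that is monotone nondecreasing, satisfies g(∅) = 0, and is λ-weakly submodular for some λ > 0. Let S ⊆ {1, …, n}, let S⋆ ⊆ {1, …, n} with |S⋆| = r ≥ 1 and S⋆ ⊄ S, and let j⋆ be an element of {1, …, n} \ S maximizing g(S ∪ {j}) over j ∉ S. Then g(S ∪ {j⋆}) − g(S) ≥ (λ/r)·(g(S⋆) − g(S)). -/
/-- **Greedy step lemma for weakly submodular functions.**
If `g` is monotone nondecreasing with `g(∅) = 0` and `λ`-weakly submodular, `S⋆` has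
cardinality `r ≥ 1` and is not contained in `S`, and `j⋆ ∉ S` maximizes
`g(S ∪ {j})` over `j ∉ S`, then `g(S ∪ {j⋆}) - g(S) ≥ (λ/r) (g(S⋆) - g(S))`. -/
theorem greedy_step_weak_submodular {n : ℕ} (g : Finset (Fin n) → ℝ)
    (hmono : ∀ A B : Finset (Fin n), A ⊆ B → g A ≤ g B)
    (hempty : g ∅ = 0)
    (lam : ℝ) (hlam : 0 < lam)
    (hweak : ∀ L S : Finset (Fin n), Disjoint L S →
      lam * (g (L ∪ S) - g L) ≤ ∑ j ∈ S, (g (insert j L) - g L))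
    (S Sstar : Finset (Fin n)) (r : ℕ) (hr : Sstar.card = r) (hr1 : 1 ≤ r)
    (hns : ¬ Sstar ⊆ S)
    (jstar : Fin n) (hj : jstar ∉ S)
    (hmax : ∀ j ∉ S, g (insert j S) ≤ g (insert jstar S)) :
    (lam / r) * (g Sstar - g S) ≤ g (insert jstar S) - g S := by
  set T := Sstar \ S with hT
  have hdisj : Disjoint S T := Finset.disjoint_sdiff
  have hΔ : 0 ≤ g (insert jstar S) - g S := by
    have := hmono S (insert jstar S) (Finset.subset_insert _ _)
    linarith
  have hsum : ∑ j ∈ T, (g (insert j S) - g S)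
      ≤ (T.card : ℝ) * (g (insert jstar S) - g S) := by
    calc ∑ j ∈ T, (g (insert j S) - g S)
        ≤ ∑ _j ∈ T, (g (insert jstar S) - g S) := by
          apply Finset.sum_le_sum
          intro j hjT
          have hjS : j ∉ S := (Finset.mem_sdiff.mp hjT).2
          have := hmax j hjS
          linarith
      _ = (T.card : ℝ) * (g (insert jstar S) - g S) := by
          rw [Finset.sum_const, nsmul_eq_mul]
  have hTcard : (T.card : ℝ) ≤ (r : ℝ) := by
    have : T.card ≤ Sstar.card := Finset.card_le_card (Finset.sdiff_subset)
    exact_mod_cast hr ▸ this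
  have hstar : g Sstar ≤ g (S ∪ T) := by
    apply hmono
    intro x hx
    by_cases hxS : x ∈ S
    · exact Finset.mem_union_left _ hxS
    · exact Finset.mem_union_right _ (Finset.mem_sdiff.mpr ⟨hx, hxS⟩)
  have hkey : lam * (g Sstar - g S) ≤ (r : ℝ) * (g (insert jstar S) - g S) := by
    have h1 : lam * (g Sstar - g S) ≤ lam * (g (S ∪ T) - g S) := by
      apply mul_le_mul_of_nonneg_left _ hlam.le
      linarith
    have h2 := hweak S T hdisj
    have h3 : (T.card : ℝ) * (g (insert jstar S) - g S)
        ≤ (r : ℝ) * (g (insert jstar S) - g S) :=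
      mul_le_mul_of_nonneg_right hTcard hΔ
    linarith
  have hrpos : (0 : ℝ) < (r : ℝ) := by exact_mod_cast hr1
  rw [div_mul_eq_mul_div, div_le_iff₀ hrpos]
  linarith [hkey, mul_comm (g (insert jstar S) - g S) (r : ℝ)]
end
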